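/- Let C be a D×D real symmetric positive-definite matrix and let N be a positive real. Consider g(H) = (N/4)·Tr(H·C) − (1/2)·log det H restricted to diagonal matrices H with strictly positive diagonal entries. Then g attains its minimum over this set at the unique diagonal matrix H* with entries H*_kk = (2/N)·(C_kk)⁻¹ for each k; that is, g(H*) ≤ g(H) for all such diagonal H, with equality only when H = H*. -/

import Mathlib

/-!
The objective is separable on diagonal matrices: with `a k = (N / 2) * C k k > 0` it equals
`(1 / 2) * ∑ k, (a k * d k - log (d k))`. Each summand is minimised exactly at `d k = (a k)⁻¹`,
since `log (a x) ≤ a x - 1` with equality only at `a x = 1`.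
-/

open Matrix Real

theorem Matrix.trace_diagonal_mul {n R : Type*} [Fintype n] [DecidableEq n]
    [NonUnitalNonAssocSemiring R] (d : n → R) (C : Matrix n n R) :
    (diagonal d * C).trace = ∑ k, d k * C k k := by
  simp only [trace, diag, diagonal_mul]

theorem Real.log_det_diagonal {n : Type*} [Fintype n] [DecidableEq n] {d : n → ℝ}
    (hd : ∀ k, d k ≠ 0) : log (diagonal d).det = ∑ k, log (d k) := by
  rw [det_diagonal, log_prod fun k _ => hd k]

theorem Real.one_add_log_le_mul_sub_log {a x : ℝ} (ha : 0 < a) (hx : 0 < x) :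
    1 + log a ≤ a * x - log x := by
  have := log_le_sub_one_of_pos (mul_pos ha hx)
  rw [log_mul ha.ne' hx.ne'] at this
  linarith

theorem Real.eq_inv_of_mul_sub_log_eq {a x : ℝ} (ha : 0 < a) (hx : 0 < x)
    (h : a * x - log x = 1 + log a) : x = a⁻¹ := by
  by_contra hne
  have hax : a * x ≠ 1 := fun h1 => hne (eq_inv_of_mul_eq_one_right h1)
  have := log_lt_sub_one_of_pos (mul_pos ha hx) hax
  rw [log_mul ha.ne' hx.ne'] at this
  linarith

theorem Real.mul_inv_sub_log_inv {a : ℝ} (ha : 0 < a) : a * a⁻¹ - log a⁻¹ = 1 + log a := by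
  rw [mul_inv_cancel₀ ha.ne', log_inv, sub_neg_eq_add]

theorem sgfs_objective_diagonal {n : Type*} [Fintype n] [DecidableEq n]
    (C : Matrix n n ℝ) (N : ℝ) {d : n → ℝ} (hd : ∀ k, 0 < d k) :
    N / 4 * (diagonal d * C).trace - 1 / 2 * log (diagonal d).det
      = 1 / 2 * ∑ k, (N / 2 * C k k * d k - log (d k)) := by
  rw [trace_diagonal_mul, log_det_diagonal fun k => (hd k).ne', Finset.mul_sum,
    Finset.mul_sum, Finset.mul_sum, ← Finset.sum_sub_distrib]
  exact Finset.sum_congr rfl fun k _ => by ring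

/-- Diagonal case of the Corollary to Theorem 3: the optimal diagonal SGFS
preconditioner minimizing `g(H) = (N/4)·Tr(H·C) − (1/2)·log det H` over diagonal
matrices with positive entries has entries `H*_kk = (2/N)·(C_kk)⁻¹`. -/
theorem sgfs_optimal_diagonal_preconditioner
    (D : ℕ) (C : Matrix (Fin D) (Fin D) ℝ) (hC : C.PosDef)
    (N : ℝ) (hN : 0 < N)
    (g : Matrix (Fin D) (Fin D) ℝ → ℝ)
    (hg : ∀ d : Fin D → ℝ, (∀ k, 0 < d k) →
      g (Matrix.diagonal d) = N / 4 * (Matrix.diagonal d * C).trace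
        - (1 / 2) * Real.log (Matrix.diagonal d).det)
    (Hstar : Matrix (Fin D) (Fin D) ℝ)
    (hHstar : Hstar = Matrix.diagonal (fun k => (2 / N) * (C k k)⁻¹)) :
    ∀ d : Fin D → ℝ, (∀ k, 0 < d k) →
      g Hstar ≤ g (Matrix.diagonal d) ∧
      (g Hstar = g (Matrix.diagonal d) → Matrix.diagonal d = Hstar) := by
  intro d hd
  set a : Fin D → ℝ := fun k => N / 2 * C k k
  have ha : ∀ k, 0 < a k := fun k => mul_pos (half_pos hN) hC.diag_pos
  have hHstar_inv : Hstar = diagonal fun k => (a k)⁻¹ := by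
    rw [hHstar]
    simp only [a, mul_inv, inv_div]
  have hle : ∀ k, a k * (a k)⁻¹ - log (a k)⁻¹ ≤ a k * d k - log (d k) := fun k => by
    rw [mul_inv_sub_log_inv (ha k)]
    exact one_add_log_le_mul_sub_log (ha k) (hd k)
  rw [hHstar_inv, hg _ fun k => inv_pos.2 (ha k), hg d hd, sgfs_objective_diagonal C N hd,
    sgfs_objective_diagonal C N fun k => inv_pos.2 (ha k)]
  refine ⟨mul_le_mul_of_nonneg_left (Finset.sum_le_sum fun k _ => hle k) one_half_pos.le,
    fun heq => ?_⟩
  have hsum := (Finset.sum_eq_sum_iff_of_le fun k _ => hle k).1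
    (mul_left_cancel₀ one_half_pos.ne' heq)
  refine congrArg diagonal (funext fun k => eq_inv_of_mul_sub_log_eq (ha k) (hd k) ?_)
  rw [← hsum k (Finset.mem_univ k), mul_inv_sub_log_inv (ha k)]
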